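/- Let (C_1,...,C_t) be a circuit decomposition of a matroid M with rank function r, and set D_j = C_1 ∪ ... ∪ C_j and lobes C̃_j = C_j − D_{j−1}. Then r(D_j) − r(D_{j−1}) = |C̃_j| − 1 for all 1 ≤ j ≤ t. -/

import Mathlib

/-!
The lobe `L = C j \ D_j` is a circuit of the contraction `M ／ D_j`: it is dependent there
because `C j ⊄ D_j`, and every circuit of `M ／ D_j` inside `L` is the lobe of some circuit of
`M`, so the minimality condition (E2) forces it to be all of `L`. The identity is then the
circuit equation `r(L) + 1 = |L|` in `M ／ D_j` combined with `r_{M ／ D}(L) + r(D) = r(L ∪ D)`.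
-/

/-- The rank of a set in a matroid: the size of a largest independent subset. -/
noncomputable def Matroid.rankOf {α : Type*} (M : Matroid α) (X : Set α) : ℕ :=
  sSup {n | ∃ I, I ⊆ X ∧ M.Indep I ∧ I.ncard = n}

/-- A circuit of a matroid is a minimal dependent set. -/
def Matroid.IsCircuitSet {α : Type*} (M : Matroid α) (C : Set α) : Prop :=
  M.Dep C ∧ ∀ D ⊂ C, M.Indep D

/-- `D j = C 0 ∪ ⋯ ∪ C (j-1)`, the union of the first `j` circuits of a sequence. -/
def circUnion {α : Type*} (C : ℕ → Set α) (j : ℕ) : Set α := ⋃ i < j, C i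

/-- `(C 0, …, C (t-1))` is a partial circuit decomposition of `M`: every `C i` is a
circuit, and for `i ≥ 1` the lobe `C i \ D i` is nonempty (E1) and inclusionwise minimal
among the lobes of circuits having a nonempty lobe (E2). -/
def Matroid.IsPartialCircDecomp {α : Type*} (M : Matroid α) (C : ℕ → Set α) (t : ℕ) : Prop :=
  (∀ i < t, M.IsCircuitSet (C i)) ∧
  ∀ i, 1 ≤ i → i < t →
    C i \ circUnion C i ≠ ∅ ∧
    ∀ C', M.IsCircuitSet C' → C' \ circUnion C i ≠ ∅ →
      ¬ (C' \ circUnion C i ⊂ C i \ circUnion C i)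

/-- A circuit decomposition is a partial circuit decomposition covering the ground set. -/
def Matroid.IsCircDecomp {α : Type*} (M : Matroid α) (C : ℕ → Set α) (t : ℕ) : Prop :=
  M.IsPartialCircDecomp C t ∧ circUnion C t = M.E

/-- A matroid is bridgeless if every element of the ground set lies in a circuit. -/
def Matroid.Bridgeless {α : Type*} (M : Matroid α) : Prop :=
  ∀ e ∈ M.E, ∃ C, M.IsCircuitSet C ∧ e ∈ C

open Set

lemma circUnion_zero {α : Type*} (C : ℕ → Set α) : circUnion C 0 = ∅ := by
  simp [circUnion]

lemma circUnion_succ {α : Type*} (C : ℕ → Set α) (j : ℕ) :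
    circUnion C (j + 1) = C j ∪ circUnion C j := by
  rw [circUnion, circUnion, biUnion_lt_succ, union_comm]

namespace Matroid

variable {α : Type*} {M : Matroid α} {K D L : Set α}

lemma isCircuitSet_iff : M.IsCircuitSet K ↔ M.IsCircuit K := by
  rw [isCircuit_iff_forall_ssubset]
  rfl

lemma cast_rankOf [M.Finite] (X : Set α) : (M.rankOf X : ℕ∞) = M.eRk X := by
  obtain ⟨I, hI⟩ := M.exists_isBasis' X
  have hIfin : I.Finite := M.set_finite I hI.indep.subset_ground
  have hgreatest : IsGreatest {n | ∃ J, J ⊆ X ∧ M.Indep J ∧ J.ncard = n} I.ncard := by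
    refine ⟨⟨I, hI.subset, hI.indep, rfl⟩, ?_⟩
    rintro _ ⟨J, hJX, hJ, rfl⟩
    have hJI := hJ.encard_le_eRk_of_subset hJX
    rw [← hI.encard_eq_eRk, ← (M.set_finite J hJ.subset_ground).cast_ncard_eq,
      ← hIfin.cast_ncard_eq] at hJI
    exact_mod_cast hJI
  rw [rankOf, hgreatest.csSup_eq, hIfin.cast_ncard_eq, hI.encard_eq_eRk]

lemma eRk_contract_add_eRk (M : Matroid α) (D X : Set α) :
    (M ／ D).eRk X + M.eRk D = M.eRk (X ∪ D) := by
  obtain ⟨I, hI⟩ := M.exists_isBasis' D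
  obtain ⟨J, hJ, hIJ⟩ := hI.indep.subset_isBasis'_of_subset (hI.subset.trans subset_union_right)
  have hJD : J ∩ D = I :=
    (hI.eq_of_subset_indep (hJ.indep.inter_right D) (subset_inter hIJ hI.subset)
      inter_subset_right).symm
  have hJc : (M ／ D).IsBasis' (J \ D) ((X ∪ D) \ D) :=
    hJ.contract_isBasis' hI (hJ.indep.subset (union_subset sdiff_subset hIJ))
  rw [union_sdiff_right] at hJc
  have hXD : (M ／ D).eRk X = (M ／ D).eRk (X \ D) := by
    rw [← eRk_inter_ground, ← eRk_inter_ground (X := X \ D), contract_ground]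
    congr 1
    tauto_set
  rw [hXD, ← hJc.encard_eq_eRk, ← hI.encard_eq_eRk, ← hJ.encard_eq_eRk, ← hJD,
    encard_sdiff_add_encard_inter]

lemma IsCircuit.eRk_union_add_one_eq_of_contract (hL : (M ／ D).IsCircuit L) :
    M.eRk (L ∪ D) + 1 = M.eRk D + L.encard := by
  rw [← M.eRk_contract_add_eRk D L, add_right_comm, hL.eRk_add_one_eq, add_comm]

lemma IsCircuit.contract_isCircuit_sdiff_of_minimal (hK : M.IsCircuit K)
    (hne : (K \ D).Nonempty)
    (hmin : ∀ C', M.IsCircuit C' → (C' \ D).Nonempty → ¬ C' \ D ⊂ K \ D) :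
    (M ／ D).IsCircuit (K \ D) := by
  have hdep : (M ／ D).Dep (K \ D) :=
    hK.contract_dep_of_not_subset fun hKD ↦ hne.ne_empty (sdiff_eq_empty.2 hKD)
  obtain ⟨C'', hC''K, hC''⟩ := hdep.exists_isCircuit_subset
  obtain ⟨C', hC', hC''C', hC'D⟩ := hC''.exists_subset_isCircuit_of_contract
  have hlobe : C' \ D = C'' :=
    subset_antisymm (sdiff_subset_iff.2 (union_comm C'' D ▸ hC'D))
      (subset_sdiff.2 ⟨hC''C', (subset_sdiff.1 hC''.subset_ground).2⟩)
  obtain rfl : C'' = K \ D := by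
    by_contra hne'
    exact hmin C' hC' (hlobe ▸ hC''.nonempty) (hlobe ▸ hC''K.ssubset_of_ne hne')
  exact hC''

lemma IsPartialCircDecomp.isCircuit_contract_lobe {C : ℕ → Set α} {t j : ℕ}
    (h : M.IsPartialCircDecomp C t) (hj : j < t) :
    (M ／ circUnion C j).IsCircuit (C j \ circUnion C j) := by
  have hCj := isCircuitSet_iff.1 (h.1 j hj)
  obtain rfl | hj1 := Nat.eq_zero_or_pos j
  · simpa [circUnion_zero] using hCj
  obtain ⟨hne, hmin⟩ := h.2 j hj1 hj
  exact hCj.contract_isCircuit_sdiff_of_minimal (nonempty_iff_ne_empty.2 hne)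
    fun C' hC' hC'ne ↦ hmin C' (isCircuitSet_iff.2 hC') hC'ne.ne_empty

end Matroid

/-- **Lobe–rank identity.** In a circuit decomposition `(C 0, …, C (t-1))` of a finite
matroid, `r(D_{j+1}) - r(D_j) = |C̃_{j+1}| - 1` for the lobe `C̃_{j+1} = C j \ D j`
(stated additively to avoid truncated subtraction). -/
theorem circDecomp_lobe_rank {α : Type*} (M : Matroid α) [M.Finite]
    (C : ℕ → Set α) (t : ℕ) (hC : M.IsCircDecomp C t) :
    ∀ j < t, M.rankOf (circUnion C (j + 1)) + 1 =
      M.rankOf (circUnion C j) + (C j \ circUnion C j).ncard := by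
  intro j hj
  have hlobe := hC.1.isCircuit_contract_lobe hj
  have hfin : (C j \ circUnion C j).Finite := Matroid.set_finite _ _ hlobe.subset_ground
  have hrank := hlobe.eRk_union_add_one_eq_of_contract
  rw [sdiff_union_self, ← circUnion_succ] at hrank
  apply Nat.cast_injective (R := ℕ∞)
  push_cast
  rw [M.cast_rankOf, M.cast_rankOf, hfin.cast_ncard_eq, hrank]
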